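/- arXiv:math/0601542 — 7 statements merged into one kernel-verified Lean document; each statement's English description precedes it below -/
import Mathlib

section
/- If (a_i) is a nonnegative decreasing sequence defined on an integer interval J, and I ⊆ J is an L-skipped set (i.e., |i−j| ≥ L for distinct i,j ∈ I), then ∑_{i∈I} a_i ≤ (1/L)∑_{i∈J} a_i + sup_{i∈J} a_i. -/
/-!
Drop the smallest element `m` of `I`; it costs at most `sup a`. Every other `i ∈ I` satisfies
`lo + L ≤ i`, so the block `[i - L, i)` lies in `J`, and since `a` decreases,
`L * a i ≤ ∑_{j ∈ [i - L, i)} a j`. The skipping condition makes these blocks pairwise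
disjoint, so summing over `i` gives `L * ∑_{I \ {m}} a ≤ ∑_J a`.
-/

open Finset

def IsSkipped (L : ℕ) (I : Finset ℕ) : Prop :=
  ∀ i ∈ I, ∀ j ∈ I, i < j → i + L ≤ j

namespace IsSkipped

variable {L : ℕ} {I : Finset ℕ}

theorem mono {S : Finset ℕ} (hI : IsSkipped L I) (hSI : S ⊆ I) : IsSkipped L S :=
  fun i hi j hj hij => hI i (hSI hi) j (hSI hj) hij

theorem pairwiseDisjoint_Ico (hI : IsSkipped L I) :
    (I : Set ℕ).PairwiseDisjoint fun i => Ico (i - L) i := by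
  intro i hi j hj hne
  rcases lt_or_gt_of_ne hne with h | h
  · have := hI i hi j hj h
    exact disjoint_left.mpr fun x hx hx' => by
      rw [mem_Ico] at hx hx'
      omega
  · have := hI j hj i hi h
    exact disjoint_left.mpr fun x hx hx' => by
      rw [mem_Ico] at hx hx'
      omega

theorem erase_min'_subset {lo hi : ℕ} (hI : IsSkipped L I) (hIJ : I ⊆ Icc lo hi)
    (hne : I.Nonempty) : I.erase (I.min' hne) ⊆ Icc (lo + L) hi := by
  intro i hiS
  have hiI : i ∈ I := mem_of_mem_erase hiS
  have hmi : I.min' hne < i := (I.min'_le i hiI).lt_of_ne (ne_of_mem_erase hiS).symm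
  have hskip := hI _ (I.min'_mem hne) i hiI hmi
  have hlo := (mem_Icc.mp (hIJ (I.min'_mem hne))).1
  have hhi := (mem_Icc.mp (hIJ hiI)).2
  exact mem_Icc.mpr ⟨by omega, hhi⟩

end IsSkipped

theorem mul_le_sum_Ico_of_antitoneOn {a : ℕ → ℝ} {s : Set ℕ} (ha : AntitoneOn a s)
    {L i : ℕ} (hLi : L ≤ i) (hs : Set.Icc (i - L) i ⊆ s) :
    (L : ℝ) * a i ≤ ∑ j ∈ Ico (i - L) i, a j := by
  have hle : (Ico (i - L) i).card • a i ≤ ∑ j ∈ Ico (i - L) i, a j :=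
    card_nsmul_le_sum _ _ _ fun j hj =>
      have hj := mem_Ico.mp hj
      ha (hs ⟨hj.1, hj.2.le⟩) (hs ⟨by omega, le_rfl⟩) hj.2.le
  rwa [Nat.card_Ico, Nat.sub_sub_self hLi, nsmul_eq_mul] at hle

theorem IsSkipped.mul_sum_le_sum_Icc {L lo hi : ℕ} {a : ℕ → ℝ} {S : Finset ℕ}
    (hnn : ∀ i ∈ Icc lo hi, 0 ≤ a i) (hdec : AntitoneOn a (Icc lo hi : Set ℕ))
    (hS : IsSkipped L S) (hSJ : S ⊆ Icc (lo + L) hi) :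
    (L : ℝ) * ∑ i ∈ S, a i ≤ ∑ i ∈ Icc lo hi, a i := by
  have hblock_subset : ∀ i ∈ S, Set.Icc (i - L) i ⊆ Icc lo hi := fun i hi' => by
    have := mem_Icc.mp (hSJ hi')
    rw [coe_Icc]
    exact Set.Icc_subset_Icc (by omega) this.2
  calc (L : ℝ) * ∑ i ∈ S, a i = ∑ i ∈ S, (L : ℝ) * a i := mul_sum _ _ _
    _ ≤ ∑ i ∈ S, ∑ j ∈ Ico (i - L) i, a j := sum_le_sum fun i hi' =>
        mul_le_sum_Ico_of_antitoneOn hdec (by have := mem_Icc.mp (hSJ hi'); omega)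
          (hblock_subset i hi')
    _ = ∑ j ∈ S.biUnion fun i => Ico (i - L) i, a j := (sum_biUnion hS.pairwiseDisjoint_Ico).symm
    _ ≤ ∑ i ∈ Icc lo hi, a i := by
        refine sum_le_sum_of_subset_of_nonneg (fun j hj => ?_) fun i hi _ => hnn i hi
        obtain ⟨i, hi', hji⟩ := mem_biUnion.mp hj
        exact mem_coe.mp (hblock_subset i hi' (Set.Ico_subset_Icc_self (by simpa using hji)))

/-- If `(a i)` is a nonnegative decreasing sequence on the integer
interval `J = Icc lo hi` and `I ⊆ J` is an `L`-skipped set (distinct elements differ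
by at least `L`), then `∑_{i∈I} a i ≤ (1/L) ∑_{i∈J} a i + sup_{i∈J} a i`. -/
theorem stmt0 (L : ℕ) (hL : 0 < L) (lo hi : ℕ) (hle : lo ≤ hi) (a : ℕ → ℝ)
    (hnn : ∀ i ∈ Finset.Icc lo hi, 0 ≤ a i)
    (hdec : ∀ i ∈ Finset.Icc lo hi, ∀ j ∈ Finset.Icc lo hi, i ≤ j → a j ≤ a i)
    (I : Finset ℕ) (hIJ : I ⊆ Finset.Icc lo hi)
    (hskip : ∀ i ∈ I, ∀ j ∈ I, i < j → i + L ≤ j) :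
    ∑ i ∈ I, a i ≤
      (1 / (L : ℝ)) * ∑ i ∈ Finset.Icc lo hi, a i +
        (Finset.Icc lo hi).sup' (Finset.nonempty_Icc.mpr hle) a := by
  have hskip : IsSkipped L I := hskip
  rcases I.eq_empty_or_nonempty with rfl | hne
  · have hsup : 0 ≤ (Icc lo hi).sup' (nonempty_Icc.mpr hle) a :=
      (hnn lo (left_mem_Icc.mpr hle)).trans (le_sup' a (left_mem_Icc.mpr hle))
    simpa using add_nonneg (mul_nonneg (by positivity) (sum_nonneg hnn)) hsup
  have hmin_mem := I.min'_mem hne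
  have hrest : (L : ℝ) * ∑ i ∈ I.erase (I.min' hne), a i ≤ ∑ i ∈ Icc lo hi, a i :=
    (hskip.mono (erase_subset _ _)).mul_sum_le_sum_Icc hnn hdec
      (hskip.erase_min'_subset hIJ hne)
  have hLpos : (0 : ℝ) < L := by exact_mod_cast hL
  rw [← add_sum_erase I a hmin_mem, add_comm]
  gcongr
  · rwa [one_div, inv_mul_eq_div, le_div_iff₀' hLpos]
  · exact le_sup' a (hIJ hmin_mem)
end

section
/- If (a_i) is a nonnegative decreasing sequence defined on an integer interval J, L is a positive integer, r ∈ ℕ, and I = {i ∈ J : i ≡ r (mod L)}, then (1/L)∑_{i∈J} a_i − sup_{i∈J} a_i ≤ ∑_{i∈I} a_i. -/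
/-!
Let `m` be the first index of `J` congruent to `r`. The fewer than `L` indices of `J` below `m`
contribute at most `L · sup a`. Every later index `j` is charged to the last `i ≤ j` with
`i ≡ r`: each such `i ∈ I` is charged by at most `L` indices, all with `a j ≤ a i`, so these
contribute at most `L · ∑_{i ∈ I} a i`.
-/
open Finset

theorem Finset.sum_le_nsmul_sum_of_card_fiber_le {ι κ R : Type*} [DecidableEq κ]
    [AddCommMonoid R] [PartialOrder R] [IsOrderedAddMonoid R]
    {s : Finset ι} {t : Finset κ} {g : ι → κ} {f : ι → R} {h : κ → R} (n : ℕ)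
    (hg : ∀ i ∈ s, g i ∈ t) (hcard : ∀ k ∈ t, #{i ∈ s | g i = k} ≤ n)
    (hfh : ∀ i ∈ s, f i ≤ h (g i)) (hh : ∀ k ∈ t, 0 ≤ h k) :
    ∑ i ∈ s, f i ≤ n • ∑ k ∈ t, h k := by
  rw [← sum_fiberwise_of_maps_to hg, smul_sum]
  refine sum_le_sum fun k hk => ?_
  calc ∑ i ∈ s with g i = k, f i
      ≤ #{i ∈ s | g i = k} • h k :=
        sum_le_card_nsmul _ _ _ fun i hi => (mem_filter.1 hi).2 ▸ hfh i (mem_filter.1 hi).1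
    _ ≤ n • h k := nsmul_le_nsmul_left (hh k hk) (hcard k hk)

theorem Nat.exists_mem_Ico_modEq {L : ℕ} (hL : 0 < L) (lo r : ℕ) :
    ∃ m ∈ Ico lo (lo + L), m ≡ r [MOD L] := by
  have hlt := Nat.mod_lt (r % L + (L - lo % L)) hL
  refine ⟨lo + (r % L + (L - lo % L)) % L, mem_Ico.2 ⟨by omega, by omega⟩, ?_⟩
  have hlo := Nat.mod_add_div lo L
  have := Nat.mod_lt lo hL
  unfold Nat.ModEq
  rw [Nat.add_mod_mod, show lo + (r % L + (L - lo % L)) = r % L + L * (lo / L + 1) by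
    rw [Nat.mul_add]; omega, Nat.add_mul_mod_self_left, Nat.mod_mod]

section DecreasingSums

variable {lo hi : ℕ} {a : ℕ → ℝ}

theorem sum_Icc_filter_lt_le_mul {L m : ℕ} {M : ℝ} (hm : m ≤ lo + L) (hM0 : 0 ≤ M)
    (hM : ∀ i ∈ Icc lo hi, a i ≤ M) :
    ∑ i ∈ Icc lo hi with i < m, a i ≤ L * M := by
  have hcard : #{i ∈ Icc lo hi | i < m} ≤ L := by
    calc #{i ∈ Icc lo hi | i < m} ≤ #(Ico lo m) :=
          card_le_card fun i hi => by simp only [mem_filter, mem_Icc, mem_Ico] at hi ⊢; omega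
      _ ≤ L := by rw [Nat.card_Ico]; omega
  calc ∑ i ∈ Icc lo hi with i < m, a i
      ≤ #{i ∈ Icc lo hi | i < m} • M :=
        sum_le_card_nsmul _ _ _ fun i hi => hM i (mem_filter.1 hi).1
    _ ≤ L • M := nsmul_le_nsmul_left hM0 hcard
    _ = L * M := nsmul_eq_mul _ _

theorem sum_Icc_filter_ge_le_mul_sum_filter_mod_eq {L m : ℕ} (hL : 0 < L) (hm : lo ≤ m)
    (hnn : ∀ i ∈ Icc lo hi, 0 ≤ a i) (hdec : AntitoneOn a (Set.Icc lo hi)) :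
    ∑ j ∈ Icc lo hi with m ≤ j, a j ≤ L * ∑ i ∈ Icc lo hi with i % L = m % L, a i := by
  set g : ℕ → ℕ := fun j => m + L * ((j - m) / L) with hg_def
  have hg : ∀ j, m ≤ j → m ≤ g j ∧ g j ≤ j ∧ j < g j + L := fun j hj => by
    have := Nat.div_add_mod (j - m) L
    have := Nat.mod_lt (j - m) hL
    simp only [hg_def]
    omega
  have hmaps :
      ∀ j ∈ {j ∈ Icc lo hi | m ≤ j}, g j ∈ {i ∈ Icc lo hi | i % L = m % L} := by
    intro j hj
    simp only [mem_filter, mem_Icc] at hj ⊢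
    have := hg j hj.2
    exact ⟨by omega, Nat.add_mul_mod_self_left _ _ _⟩
  have hfiber : ∀ i ∈ {i ∈ Icc lo hi | i % L = m % L},
      #{j ∈ {j ∈ Icc lo hi | m ≤ j} | g j = i} ≤ L := by
    intro i _
    calc #{j ∈ {j ∈ Icc lo hi | m ≤ j} | g j = i} ≤ #(Ico i (i + L)) :=
          card_le_card fun j hj => by
            simp only [mem_filter, mem_Icc, mem_Ico] at hj ⊢
            have := hg j hj.1.2
            omega
      _ = L := by rw [Nat.card_Ico]; omega
  rw [← nsmul_eq_mul]
  refine sum_le_nsmul_sum_of_card_fiber_le L hmaps hfiber (fun j hj => ?_)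
    fun i hi => hnn i (mem_filter.1 hi).1
  simp only [mem_filter, mem_Icc] at hj
  have := hg j hj.2
  exact hdec ⟨by omega, by omega⟩ hj.1 this.2.1

end DecreasingSums

/-- If `(a i)` is a nonnegative decreasing sequence on the integer
interval `J = Icc lo hi`, `L > 0`, `r ∈ ℕ`, and `I = {i ∈ J : i ≡ r (mod L)}`, then
`(1/L) ∑_{i∈J} a i − sup_{i∈J} a i ≤ ∑_{i∈I} a i`. -/
theorem stmt1 (L : ℕ) (hL : 0 < L) (r : ℕ) (lo hi : ℕ) (hle : lo ≤ hi) (a : ℕ → ℝ)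
    (hnn : ∀ i ∈ Finset.Icc lo hi, 0 ≤ a i)
    (hdec : ∀ i ∈ Finset.Icc lo hi, ∀ j ∈ Finset.Icc lo hi, i ≤ j → a j ≤ a i) :
    (1 / (L : ℝ)) * ∑ i ∈ Finset.Icc lo hi, a i -
        (Finset.Icc lo hi).sup' (Finset.nonempty_Icc.mpr hle) a ≤
      ∑ i ∈ (Finset.Icc lo hi).filter (fun i => i % L = r % L), a i := by
  obtain ⟨m, hm, hmr⟩ := Nat.exists_mem_Ico_modEq hL lo r
  rw [mem_Ico] at hm
  set M := (Icc lo hi).sup' (nonempty_Icc.mpr hle) a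
  have hM0 : 0 ≤ M := (hnn lo (left_mem_Icc.2 hle)).trans (le_sup' a (left_mem_Icc.2 hle))
  have hlow := sum_Icc_filter_lt_le_mul (L := L) hm.2.le hM0 fun i hi => le_sup' a hi
  have hhigh := sum_Icc_filter_ge_le_mul_sum_filter_mod_eq hL hm.1 hnn
    fun i hi j hj => hdec i (mem_Icc.2 hi) j (mem_Icc.2 hj)
  rw [hmr] at hhigh
  have hsplit := sum_filter_add_sum_filter_not (Icc lo hi) (· < m) a
  simp only [not_lt] at hsplit
  rw [sub_le_iff_le_add, one_div, inv_mul_le_iff₀ (by exact_mod_cast hL)]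
  linarith
end

section
/- Let (θ_n) be a regular sequence of reals in (0,1), i.e., (θ_n) is nonincreasing and θ_{m+n} ≥ θ_m θ_n for all m,n. If lim_m limsup_n θ_{m+n}/θ_n < 1, then lim_n θ_n^{1/n} < 1. -/
open Filter

/-- Let `(θ n)` be a regular sequence in `(0,1)` (nonincreasing and
supermultiplicative).  If `lim_m limsup_n θ (m+n) / θ n < 1`, then
`lim_n (θ n)^(1/n) < 1`. -/
theorem stmt2 (θ : ℕ → ℝ)
    (h01 : ∀ n, 1 ≤ n → 0 < θ n ∧ θ n < 1)
    (hmono : ∀ m n, 1 ≤ m → m ≤ n → θ n ≤ θ m)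
    (hsuper : ∀ m n, 1 ≤ m → 1 ≤ n → θ m * θ n ≤ θ (m + n))
    (l : ℝ)
    (hlim : Tendsto (fun m => limsup (fun n => θ (m + n) / θ n) atTop) atTop (nhds l))
    (hl : l < 1) :
    ∃ t : ℝ, t < 1 ∧ Tendsto (fun n => θ n ^ ((n : ℝ)⁻¹)) atTop (nhds t) := by
  classical
  set u : ℕ → ℝ := fun n => if n = 0 then 0 else -Real.log (θ n) with hu
  have hueq : ∀ n, 1 ≤ n → u n = -Real.log (θ n) := by
    intro n hn
    simp only [hu, if_neg (by omega : n ≠ 0)]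
  have hunn : ∀ n, 0 ≤ u n := by
    intro n
    rcases Nat.eq_zero_or_pos n with hn | hn
    · simp [hu, hn]
    · rw [hueq n hn]
      have h := h01 n hn
      have : Real.log (θ n) ≤ 0 := Real.log_nonpos h.1.le h.2.le
      linarith
  have hsub : Subadditive u := by
    intro m n
    rcases Nat.eq_zero_or_pos m with hm | hm
    · simp [hu, hm]
    rcases Nat.eq_zero_or_pos n with hn | hn
    · simp [hu, hn]
    rw [hueq m hm, hueq n hn, hueq (m + n) (by omega)]
    have h1 := (h01 m hm).1
    have h2 := (h01 n hn).1
    have h3 := hsuper m n hm hn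
    have hlog : Real.log (θ m) + Real.log (θ n) ≤ Real.log (θ (m + n)) := by
      rw [← Real.log_mul (ne_of_gt h1) (ne_of_gt h2)]
      exact Real.log_le_log (mul_pos h1 h2) h3
    linarith
  have hbdd : BddBelow (Set.range fun n => u n / n) := by
    refine ⟨0, ?_⟩
    rintro x ⟨n, rfl⟩
    exact div_nonneg (hunn n) (Nat.cast_nonneg n)
  have hT : Tendsto (fun n : ℕ => u n / n) atTop (nhds hsub.lim) := hsub.tendsto_lim hbdd
  -- choose c with l < c < 1, 0 < c
  set c : ℝ := (max l 0 + 1) / 2 with hc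
  have hml0 : max l 0 < 1 := max_lt hl one_pos
  have hc0 : 0 < c := by
    have : (0 : ℝ) ≤ max l 0 := le_max_right _ _
    rw [hc]; linarith
  have hc1 : c < 1 := by rw [hc]; linarith
  have hlc : l < c := by
    have h1 : l ≤ max l 0 := le_max_left _ _
    rw [hc]; linarith
  -- find m ≥ 1 with limsup < c
  have hev : ∀ᶠ m in atTop, limsup (fun n => θ (m + n) / θ n) atTop < c :=
    hlim.eventually (eventually_lt_nhds hlc)
  obtain ⟨m, hm1, hmls⟩ : ∃ m, 1 ≤ m ∧ limsup (fun n => θ (m + n) / θ n) atTop < c := by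
    rcases (hev.and (eventually_ge_atTop 1)).exists with ⟨m, h1, h2⟩
    exact ⟨m, h2, h1⟩
  have hbdd2 : IsBoundedUnder (· ≤ ·) atTop (fun n => θ (m + n) / θ n) := by
    refine ⟨1, ?_⟩
    rw [eventually_map]
    filter_upwards [eventually_ge_atTop 1] with n hn
    have hpos := (h01 n hn).1
    have hle : θ (m + n) ≤ θ n := hmono n (m + n) hn (Nat.le_add_left n m)
    exact div_le_one_of_le₀ hle hpos.le
  have hevn : ∀ᶠ n in atTop, θ (m + n) / θ n < c :=
    eventually_lt_of_limsup_lt hmls hbdd2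
  obtain ⟨N, hN1, hNall⟩ : ∃ N, 1 ≤ N ∧ ∀ n, N ≤ n → θ (m + n) / θ n < c := by
    rcases eventually_atTop.mp hevn with ⟨N, hN⟩
    exact ⟨max N 1, le_max_right _ _, fun n hn => hN n (le_trans (le_max_left _ _) hn)⟩
  have key : ∀ k, θ (k * m + N) ≤ c ^ k * θ N := by
    intro k
    induction k with
    | zero => simp
    | succ k ih =>
      have hkN : 1 ≤ k * m + N := by omega
      have h1 : (k + 1) * m + N = m + (k * m + N) := by ring
      have h2 : θ (m + (k * m + N)) / θ (k * m + N) < c :=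
        hNall (k * m + N) (by omega)
      have hpos : 0 < θ (k * m + N) := (h01 _ hkN).1
      have h3 : θ (m + (k * m + N)) ≤ c * θ (k * m + N) := by
        rw [div_lt_iff₀ hpos] at h2
        exact h2.le
      calc θ ((k + 1) * m + N) = θ (m + (k * m + N)) := by rw [h1]
        _ ≤ c * θ (k * m + N) := h3
        _ ≤ c * (c ^ k * θ N) := mul_le_mul_of_nonneg_left ih hc0.le
        _ = c ^ (k + 1) * θ N := by ring
  -- lower bound on u along the subsequence
  set C : ℝ := -Real.log c with hC
  have hCpos : 0 < C := by
    have := Real.log_neg hc0 hc1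
    rw [hC]; linarith
  have hmNpos : (0 : ℝ) < (m : ℝ) + N := by positivity
  have hlow : ∀ k, 1 ≤ k → C / ((m : ℝ) + N) ≤ u (k * m + N) / ((k * m + N : ℕ) : ℝ) := by
    intro k hk
    have hkN : 1 ≤ k * m + N := by omega
    have hpos : 0 < θ (k * m + N) := (h01 _ hkN).1
    have hNpos : 0 < θ N := (h01 N hN1).1
    have hlog : Real.log (θ (k * m + N)) ≤ k * Real.log c + Real.log (θ N) := by
      have := Real.log_le_log hpos (key k)
      rwa [Real.log_mul (by positivity) (ne_of_gt hNpos), Real.log_pow] at this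
    have huN : 0 ≤ -Real.log (θ N) := by
      have := Real.log_nonpos hNpos.le (h01 N hN1).2.le
      linarith
    have hnum : (k : ℝ) * C ≤ u (k * m + N) := by
      rw [hueq _ hkN, hC]; linarith
    have hkpos : (0 : ℝ) < (k : ℝ) := by exact_mod_cast hk
    have hden : (0 : ℝ) < ((k * m + N : ℕ) : ℝ) := by
      exact_mod_cast Nat.lt_of_lt_of_le Nat.zero_lt_one hkN
    have hden2 : ((k * m + N : ℕ) : ℝ) ≤ (k : ℝ) * ((m : ℝ) + N) := by
      push_cast
      have h1 : (1 : ℝ) ≤ (k : ℝ) := by exact_mod_cast hk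
      nlinarith [Nat.cast_nonneg (α := ℝ) N]
    have := div_le_div₀ (hunn _) hnum hden hden2
    rwa [mul_div_mul_left _ _ (ne_of_gt hkpos)] at this
  have hcomp : Tendsto (fun k : ℕ => k * m + N) atTop atTop := by
    apply tendsto_atTop_mono (fun k => ?_) tendsto_id
    have h := Nat.le_mul_of_pos_right k hm1
    show k ≤ k * m + N
    omega
  have hsubseq : Tendsto (fun k : ℕ => u (k * m + N) / ((k * m + N : ℕ) : ℝ))
      atTop (nhds hsub.lim) := hT.comp hcomp
  have hL : C / ((m : ℝ) + N) ≤ hsub.lim :=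
    ge_of_tendsto hsubseq (eventually_atTop.mpr ⟨1, hlow⟩)
  have hLpos : 0 < hsub.lim := lt_of_lt_of_le (div_pos hCpos hmNpos) hL
  refine ⟨Real.exp (-hsub.lim), ?_, ?_⟩
  · rw [Real.exp_lt_one_iff]
    linarith
  · have hexp : Tendsto (fun n : ℕ => Real.exp (-(u n / n))) atTop
        (nhds (Real.exp (-hsub.lim))) := (Real.continuous_exp.tendsto _).comp hT.neg
    refine hexp.congr' ?_
    filter_upwards [eventually_ge_atTop 1] with n hn
    have hpos := (h01 n hn).1
    rw [Real.rpow_def_of_pos hpos, hueq n hn]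
    congr 1
    field_simp
end

section
/- Let θ ∈ (0,1) and θ_n = θ^n/(n+1). For any positive integers R, t and any arithmetic progression s_1 < … < s_R in ℕ, max_{1≤i≤R} θ_{s_i+t}/θ_{s_i} ≤ (2/R) ∑_{i=1}^R θ_{s_i+t}/θ_{s_i}. -/
/-!
Write `a_j = s_j + 1`, so that `θ_{s_j+t}/θ_{s_j} = θ^t f(a_j)` with `f x = x / (x + t)`, a concave
increasing function with `f 0 = 0`. Concavity gives `f x ≥ (x / M) f M` on `[0, M]`, where `M` is the
last term of the progression, and the terms of an arithmetic progression of nonnegative reals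
sum to at least `R M / 2`. Hence `∑ f(a_j) ≥ (R / 2) f M ≥ (R / 2) max_i f(a_i)`.
-/

open Finset

lemma sum_range_arith (a d : ℝ) (R : ℕ) :
    ∑ j ∈ range R, (a + j * d) = R * a + R * (R - 1) / 2 * d := by
  induction R with
  | zero => simp
  | succ R ih => rw [sum_range_succ, ih]; push_cast; ring

lemma half_mul_last_le_sum_range_arith {a : ℝ} (ha : 0 ≤ a) (d : ℝ) (R : ℕ) :
    R / 2 * (a + (R - 1) * d) ≤ ∑ j ∈ range R, (a + j * d) := by
  rw [sum_range_arith]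
  nlinarith [R.cast_nonneg (α := ℝ)]

lemma ConcaveOn.div_mul_le_apply {f : ℝ → ℝ} (hf : ConcaveOn ℝ (Set.Ici 0) f) (hf0 : 0 ≤ f 0)
    {x M : ℝ} (hx : 0 ≤ x) (hM : 0 < M) (hxM : x ≤ M) : x / M * f M ≤ f x := by
  have hw : 0 ≤ x / M := div_nonneg hx hM.le
  have hw' : 0 ≤ 1 - x / M := by rw [sub_nonneg, div_le_one hM]; exact hxM
  have := hf.2 (Set.mem_Ici.2 le_rfl) (Set.mem_Ici.2 hM.le) hw' hw (by ring)
  simp only [smul_eq_mul, mul_zero, zero_add, div_mul_cancel₀ x hM.ne'] at this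
  linarith [mul_nonneg hw' hf0]

theorem apply_le_two_div_mul_sum_of_concaveOn {f : ℝ → ℝ} (hf : ConcaveOn ℝ (Set.Ici 0) f)
    (hf_mono : MonotoneOn f (Set.Ici 0)) (hf0 : 0 ≤ f 0) {a d : ℝ} (ha : 0 < a) (hd : 0 ≤ d)
    {R i : ℕ} (hi : i < R) :
    f (a + i * d) ≤ 2 / R * ∑ j ∈ range R, f (a + j * d) := by
  set M := a + (R - 1) * d
  have hR : (0 : ℝ) < R := by exact_mod_cast (Nat.zero_le i).trans_lt hi
  have hj_le : ∀ j < R, (j : ℝ) ≤ R - 1 := fun j hj => by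
    rw [le_sub_iff_add_le]; exact_mod_cast hj
  have hterm_nonneg : ∀ j : ℕ, 0 ≤ a + j * d := fun j => by positivity
  have hterm_le : ∀ j < R, a + j * d ≤ M := fun j hj =>
    add_le_add_right (mul_le_mul_of_nonneg_right (hj_le j hj) hd) a
  have hM : 0 < M := ha.trans_le (by simpa using hterm_le 0 (by omega))
  have hfM : 0 ≤ f M := hf0.trans (hf_mono (Set.mem_Ici.2 le_rfl) (Set.mem_Ici.2 hM.le) hM.le)
  calc f (a + i * d)
      ≤ f M := hf_mono (Set.mem_Ici.2 (hterm_nonneg i)) (Set.mem_Ici.2 hM.le) (hterm_le i hi)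
    _ = 2 / R * (R / 2 * M / M * f M) := by field_simp
    _ ≤ 2 / R * ((∑ j ∈ range R, (a + j * d)) / M * f M) := by
        gcongr; exact half_mul_last_le_sum_range_arith ha.le d R
    _ = 2 / R * ∑ j ∈ range R, (a + j * d) / M * f M := by rw [sum_div, sum_mul]
    _ ≤ 2 / R * ∑ j ∈ range R, f (a + j * d) := by
        gcongr with j hj
        exact hf.div_mul_le_apply hf0 (hterm_nonneg j) hM (hterm_le j (mem_range.1 hj))

lemma concaveOn_div_add_const {c : ℝ} (hc : 0 < c) :
    ConcaveOn ℝ (Set.Ici 0) fun x => x / (x + c) := by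
  refine ⟨convex_Ici 0, fun x hx y hy α β hα hβ hαβ => ?_⟩
  rw [Set.mem_Ici] at hx hy
  simp only [smul_eq_mul]
  rw [← mul_div_assoc, ← mul_div_assoc, div_add_div _ _ (by positivity) (by positivity),
    div_le_div_iff₀ (by positivity) (by positivity)]
  obtain rfl : β = 1 - α := by linarith
  nlinarith [mul_nonneg (mul_nonneg hα hβ) (mul_nonneg hc.le (sq_nonneg (x - y))),
    mul_nonneg hx hy, mul_nonneg hα hβ]

lemma monotoneOn_div_add_const {c : ℝ} (hc : 0 < c) :
    MonotoneOn (fun x => x / (x + c)) (Set.Ici 0) := by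
  intro x hx y _ hxy
  rw [Set.mem_Ici] at hx
  dsimp only
  rw [div_le_div_iff₀ (by positivity) (by linarith)]
  nlinarith

lemma pow_div_succ_ratio {θ : ℝ} (hθ : θ ≠ 0) (n t : ℕ) :
    θ ^ (n + t) / (((n + t : ℕ) : ℝ) + 1) / (θ ^ n / ((n : ℝ) + 1))
      = θ ^ t * (((n : ℝ) + 1) / (((n : ℝ) + 1) + t)) := by
  push_cast
  field_simp
  ring

theorem stmt6_general (θ : ℝ) (h0 : 0 < θ)
    (θn : ℕ → ℝ) (hθn : ∀ n, θn n = θ ^ n / ((n : ℝ) + 1))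
    (R t : ℕ) (ht : 0 < t)
    (s₀ dstep : ℕ) :
    ∀ i < R, θn (s₀ + i * dstep + t) / θn (s₀ + i * dstep) ≤
      (2 / (R : ℝ)) *
        ∑ j ∈ Finset.range R, θn (s₀ + j * dstep + t) / θn (s₀ + j * dstep) := by
  intro i hi
  have ht' : (0 : ℝ) < t := by exact_mod_cast ht
  have hratio : ∀ j : ℕ, θn (s₀ + j * dstep + t) / θn (s₀ + j * dstep)
      = θ ^ t * ((((s₀ : ℝ) + 1) + j * dstep) / ((((s₀ : ℝ) + 1) + j * dstep) + t)) := by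
    intro j
    rw [hθn, hθn, pow_div_succ_ratio h0.ne']
    push_cast
    ring
  simp only [hratio, ← mul_sum, mul_left_comm (2 / (R : ℝ))]
  gcongr
  exact apply_le_two_div_mul_sum_of_concaveOn (concaveOn_div_add_const ht')
    (monotoneOn_div_add_const ht') (by simp) (by positivity) (Nat.cast_nonneg _) hi

/-- Let `θ ∈ (0,1)` and `θ_n = θ^n/(n+1)`.  For any positive
integers `R, t` and any arithmetic progression `s_i = s₀ + i·dstep` (`i < R`),
`max_i θ_{s_i+t}/θ_{s_i} ≤ (2/R) ∑_i θ_{s_i+t}/θ_{s_i}`. -/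
theorem stmt6 (θ : ℝ) (h0 : 0 < θ) (h1 : θ < 1)
    (θn : ℕ → ℝ) (hθn : ∀ n, θn n = θ ^ n / ((n : ℝ) + 1))
    (R t : ℕ) (hR : 0 < R) (ht : 0 < t)
    (s₀ dstep : ℕ) (hs₀ : 1 ≤ s₀) (hd : 0 < dstep) :
    ∀ i < R, θn (s₀ + i * dstep + t) / θn (s₀ + i * dstep) ≤
      (2 / (R : ℝ)) *
        ∑ j ∈ Finset.range R, θn (s₀ + j * dstep + t) / θn (s₀ + j * dstep) :=
  stmt6_general θ h0 θn hθn R t ht s₀ dstep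
end

section
/- Let θ ∈ (0,1), θ_n = θ^n/(n+1), and N, p positive integers. For any positive integers ℓ_1, …, ℓ_N with ∑ℓ_i = p, one has ∏_{i=1}^N θ_{ℓ_i} ≤ (N/2^{N-1}) θ_p. Consequently, defining Θ_p(N) = max{∏_{i=1}^N θ_{ℓ_i} : ℓ_i ∈ ℕ_{>0}, ∑ℓ_i = p}, we have sup_p Θ_p(N)/θ_p ≤ N/2^{N-1}. -/
lemma aux_nat : ∀ (M : ℕ) (ℓ : Fin (M+1) → ℕ), (∀ i, 1 ≤ ℓ i) →
    2 ^ M * (∑ i, ℓ i + 1) ≤ (M + 1) * ∏ i, (ℓ i + 1) := by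
  intro M
  induction M with
  | zero =>
    intro ℓ _
    simp [Fin.sum_univ_one, Fin.prod_univ_one]
  | succ N ih =>
    intro ℓ hℓ
    have key := ih (fun i => ℓ i.succ) (fun i => hℓ i.succ)
    set s := ∑ i : Fin (N+1), ℓ i.succ with hs
    set P := ∏ i : Fin (N+1), (ℓ i.succ + 1) with hP
    have hsum : ∑ i, ℓ i = ℓ 0 + s := by rw [Fin.sum_univ_succ]
    have hprod : ∏ i, (ℓ i + 1) = (ℓ 0 + 1) * P := by rw [Fin.prod_univ_succ]
    have hsge : N + 1 ≤ s := by
      calc N + 1 = ∑ _i : Fin (N+1), 1 := by simp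
      _ ≤ s := Finset.sum_le_sum (fun i _ => hℓ i.succ)
    have ha : 1 ≤ ℓ 0 := hℓ 0
    obtain ⟨b, hb⟩ : ∃ b, ℓ 0 = b + 1 := ⟨ℓ 0 - 1, by omega⟩
    rw [hsum, hprod, hb]
    have arith : 2 * (N+1) * ((b+1) + s + 1) ≤ (N+2) * (((b+1)+1) * (s+1)) := by
      have h1 : b * (N+1) ≤ b * s := Nat.mul_le_mul_left b hsge
      nlinarith [h1, hsge, Nat.zero_le (N * (b * s)), Nat.zero_le (b*s)]
    refine Nat.le_of_mul_le_mul_left ?_ (Nat.succ_pos N)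
    calc (N+1) * (2 ^ (N+1) * ((b+1) + s + 1))
        = 2 ^ N * (2 * (N+1) * ((b+1) + s + 1)) := by ring
      _ ≤ 2 ^ N * ((N+2) * (((b+1)+1) * (s+1))) := Nat.mul_le_mul_left _ arith
      _ = (N+2) * ((b+1)+1) * (2 ^ N * (s+1)) := by ring
      _ ≤ (N+2) * ((b+1)+1) * ((N+1) * P) := Nat.mul_le_mul_left _ key
      _ = (N+1) * ((N + 1 + 1) * (((b+1) + 1) * P)) := by ring

/-- Let `θ ∈ (0,1)`, `θ_n = θ^n/(n+1)` and `N, p` positive integers.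
For any positive integers `ℓ 1, …, ℓ N` with `∑ ℓ i = p`,
`∏ θ_{ℓ i} ≤ (N / 2^(N-1)) θ_p`.  Consequently `sup_p Θ_p(N)/θ_p ≤ N/2^(N-1)`,
where `Θ_p(N)` is the maximum of such products. -/
theorem stmt7 (θ : ℝ) (h0 : 0 < θ) (h1 : θ < 1)
    (θn : ℕ → ℝ) (hθn : ∀ n, θn n = θ ^ n / ((n : ℝ) + 1))
    (N p : ℕ) (hN : 0 < N) (hp : 0 < p)
    (ℓ : Fin N → ℕ) (hℓ : ∀ i, 1 ≤ ℓ i) (hsum : ∑ i, ℓ i = p) :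
    ∏ i, θn (ℓ i) ≤ ((N : ℝ) / 2 ^ (N - 1)) * θn p := by
  obtain ⟨M, rfl⟩ : ∃ M, N = M + 1 := ⟨N - 1, by omega⟩
  have keyN := aux_nat M ℓ hℓ
  rw [hsum] at keyN
  have keyR : (2:ℝ) ^ M * ((p:ℝ) + 1) ≤ ((M:ℝ) + 1) * ∏ i, ((ℓ i : ℝ) + 1) := by
    have := (Nat.cast_le (α := ℝ)).mpr keyN
    push_cast at this
    convert this using 2 <;> push_cast <;> ring
  have hQpos : (0:ℝ) < ∏ i, ((ℓ i : ℝ) + 1) :=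
    Finset.prod_pos (fun i _ => by positivity)
  have hprodeq : ∏ i, θn (ℓ i) = θ ^ p / ∏ i, ((ℓ i : ℝ) + 1) := by
    simp only [hθn, div_eq_mul_inv]
    rw [Finset.prod_mul_distrib, ← Finset.prod_inv_distrib,
      Finset.prod_pow_eq_pow_sum, hsum]
  have hθp : (0:ℝ) < θ ^ p := by positivity
  rw [hprodeq, hθn]
  simp only [Nat.add_sub_cancel]
  have heq : ((M+1 : ℕ) : ℝ) / 2 ^ M * (θ ^ p / ((p:ℝ) + 1))
      = (((M:ℝ)+1) * θ ^ p) / (2 ^ M * ((p:ℝ) + 1)) := by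
    push_cast; rw [div_mul_div_comm]
  rw [heq, div_le_div_iff₀ hQpos (by positivity)]
  nlinarith [mul_le_mul_of_nonneg_left keyR hθp.le]
end

section
/- Let (θ_n) be a regular sequence in (0,1), θ = sup θ_n^{1/n}, φ_n = θ_n/θ^n, and suppose 0 < c = inf φ_n ≤ sup φ_n = d < 1. Then for every N ≥ 1 and every p ≥ N, Θ_p(N)/θ_p ≤ d^N/c, where Θ_p(N) = max{∏_{i=1}^N θ_{ℓ_i} : ℓ_i ≥ 1, ∑ℓ_i = p}. -/
/-- Let `(θ n)` be a regular sequence in `(0,1)`, `θ = sup (θ n)^(1/n)`,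
`φ n = θ n / θ^n`, and suppose `0 < c = inf φ n ≤ sup φ n = d < 1`.  Then for every
`N ≥ 1`, `p ≥ N` and positive integers `ℓ 1, …, ℓ N` with `∑ ℓ i = p`,
`∏ θ (ℓ i) ≤ (d^N / c) θ p`; i.e. `Θ_p(N)/θ_p ≤ d^N/c`. -/
theorem stmt8 (θseq : ℕ → ℝ) (θ c d : ℝ)
    (h01 : ∀ n, 1 ≤ n → 0 < θseq n ∧ θseq n < 1)
    (hmono : ∀ m n, 1 ≤ m → m ≤ n → θseq n ≤ θseq m)
    (hsuper : ∀ m n, 1 ≤ m → 1 ≤ n → θseq m * θseq n ≤ θseq (m + n))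
    (hθ : IsLUB {x : ℝ | ∃ n, 1 ≤ n ∧ x = θseq n ^ ((n : ℝ)⁻¹)} θ)
    (hc : IsGLB {x : ℝ | ∃ n, 1 ≤ n ∧ x = θseq n / θ ^ n} c) (hc0 : 0 < c)
    (hd : IsLUB {x : ℝ | ∃ n, 1 ≤ n ∧ x = θseq n / θ ^ n} d) (hd1 : d < 1) :
    ∀ N p : ℕ, 1 ≤ N → N ≤ p → ∀ ℓ : Fin N → ℕ, (∀ i, 1 ≤ ℓ i) → (∑ i, ℓ i = p) →
      ∏ i, θseq (ℓ i) ≤ (d ^ N / c) * θseq p := by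
  have hθ1 := (h01 1 le_rfl).1
  have hθpos : 0 < θ := by
    have hmem : θseq 1 ^ ((1 : ℝ)⁻¹) ∈ {x : ℝ | ∃ n, 1 ≤ n ∧ x = θseq n ^ ((n : ℝ)⁻¹)} := by
      exact ⟨1, le_rfl, by norm_num⟩
    have := hθ.1 hmem
    calc (0 : ℝ) < θseq 1 ^ ((1 : ℝ)⁻¹) := Real.rpow_pos_of_pos hθ1 _
      _ ≤ θ := this
  have hle : ∀ n, 1 ≤ n → θseq n ≤ d * θ ^ n := by
    intro n hn
    have := hd.1 ⟨n, hn, rfl⟩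
    have hp : (0 : ℝ) < θ ^ n := pow_pos hθpos n
    calc θseq n = θseq n / θ ^ n * θ ^ n := by field_simp
      _ ≤ d * θ ^ n := by
          exact mul_le_mul_of_nonneg_right this hp.le
  have hge : ∀ n, 1 ≤ n → c * θ ^ n ≤ θseq n := by
    intro n hn
    have := hc.1 ⟨n, hn, rfl⟩
    have hp : (0 : ℝ) < θ ^ n := pow_pos hθpos n
    calc c * θ ^ n ≤ θseq n / θ ^ n * θ ^ n := mul_le_mul_of_nonneg_right this hp.le
      _ = θseq n := by field_simp
  have hd0 : 0 < d := by
    have h1 := hge 1 le_rfl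
    have h2 := hle 1 le_rfl
    nlinarith [pow_pos hθpos 1]
  intro N p hN hNp ℓ hℓ hsum
  have hp1 : 1 ≤ p := le_trans hN hNp
  have step1 : ∏ i, θseq (ℓ i) ≤ ∏ i : Fin N, (d * θ ^ ℓ i) := by
    apply Finset.prod_le_prod
    · intro i _; exact (h01 (ℓ i) (hℓ i)).1.le
    · intro i _; exact hle (ℓ i) (hℓ i)
  have step2 : ∏ i : Fin N, (d * θ ^ ℓ i) = d ^ N * θ ^ p := by
    rw [Finset.prod_mul_distrib, Finset.prod_const, Finset.card_univ, Fintype.card_fin,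
      Finset.prod_pow_eq_pow_sum, hsum]
  have step3 : d ^ N * θ ^ p ≤ (d ^ N / c) * θseq p := by
    have := hge p hp1
    rw [div_mul_eq_mul_div, le_div_iff₀ hc0]
    nlinarith [pow_pos hd0 N, pow_pos hθpos p]
  calc ∏ i, θseq (ℓ i) ≤ ∏ i : Fin N, (d * θ ^ ℓ i) := step1
    _ = d ^ N * θ ^ p := step2
    _ ≤ (d ^ N / c) * θseq p := step3
end

section
/- For all m, n ≥ 0, if (F_i)_{i=1}^k is a sequence of sets with F_1 < F_2 < … < F_k, each F_i ∈ S_n, and {min F_i : 1 ≤ i ≤ k} ∈ S_m, then ⋃_{i=1}^k F_i ∈ S_{m+n}. -/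
/-!
Induction on `m`. For `m = 0` the minima form a set of at most one element, and since
`i ↦ min F i` is strictly increasing there is at most one set `F i`. For `m + 1`, write the
set of minima as `G_0 < ⋯ < G_{K-1}` with `G_j ∈ S_m` and `K ≤ min G_0`, and group the `F i`
according to the block `G_j` containing `min F i`. By induction each group has its union
`H_j` in `S_{m+n}`; the `H_j` are nonempty and successive, and `K ≤ min G_0 = min H_0`,
so `⋃ H_j ∈ S_{m+n+1}`.
-/

/-- The Schreier families: `Schreier 0` consists of the singletons and `∅`;
`Schreier (n+1)` consists of all unions `G_0 ∪ … ∪ G_{k-1}` of nonempty members of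
`Schreier n` with `G_0 < G_1 < … < G_{k-1}` and `k ≤ min G_0`. -/
def Schreier : ℕ → Set (Finset ℕ)
  | 0 => {F | F.card ≤ 1}
  | n + 1 => {F | ∃ (k : ℕ) (G : ℕ → Finset ℕ),
      F = (Finset.range k).biUnion G ∧
      (∀ i < k, G i ∈ Schreier n) ∧
      (∀ i < k, (G i).Nonempty) ∧
      (∀ i j, i < j → j < k → ∀ a ∈ G i, ∀ b ∈ G j, a < b) ∧
      (∀ a ∈ G 0, k ≤ a)}

/-- The minimum of a finite set of naturals (`0` for the empty set). -/
def minN (E : Finset ℕ) : ℕ := E.min.untopD 0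

lemma minN_eq_min' {E : Finset ℕ} (h : E.Nonempty) : minN E = E.min' h := by
  rw [minN, ← Finset.coe_min' h, WithTop.untopD_coe]

lemma minN_mem {E : Finset ℕ} (h : E.Nonempty) : minN E ∈ E := by
  rw [minN_eq_min' h]
  exact E.min'_mem h

lemma minN_le_of_mem {E : Finset ℕ} {a : ℕ} (ha : a ∈ E) : minN E ≤ a := by
  rw [minN_eq_min' ⟨a, ha⟩]
  exact E.min'_le a ha

lemma empty_mem_Schreier (n : ℕ) : ∅ ∈ Schreier n := by
  cases n with
  | zero => simp [Schreier]
  | succ n => exact ⟨0, fun _ => ∅, by simp, by simp, by simp, by omega, by simp⟩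

namespace Finset

variable {ι α : Type*} [DecidableEq α] {s : Finset ι} {f : ι → α}

lemma image_filter_mem_eq_of_subset {G : Finset α} (hG : G ⊆ s.image f) :
    (s.filter (fun i => f i ∈ G)).image f = G := by
  rw [← filter_image (p := (· ∈ G)), filter_mem_eq_inter, inter_eq_right.mpr hG]

lemma biUnion_filter_mem_eq_of_image_eq [DecidableEq ι] {κ : Type*} {J : Finset κ}
    {G : κ → Finset α} (hs : s.image f = J.biUnion G) :
    J.biUnion (fun j => s.filter (fun i => f i ∈ G j)) = s := by
  ext i
  have hcover : f i ∈ s.image f → f i ∈ J.biUnion G := fun h => hs ▸ h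
  simp only [mem_biUnion] at hcover
  simp only [mem_biUnion, mem_filter]
  exact ⟨fun ⟨_, _, hi, _⟩ => hi,
    fun hi => (hcover (mem_image_of_mem f hi)).imp fun _ h => ⟨h.1, hi, h.2⟩⟩

end Finset

section SuccessiveSets

open Finset

variable {ι : Type*} [LinearOrder ι] {s : Finset ι} {F : ι → Finset ℕ}

lemma strictMonoOn_minN (hne : ∀ i ∈ s, (F i).Nonempty)
    (hord : ∀ i ∈ s, ∀ j ∈ s, i < j → ∀ a ∈ F i, ∀ b ∈ F j, a < b) :
    StrictMonoOn (fun i => minN (F i)) s :=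
  fun i hi j hj hij => hord i hi j hj hij _ (minN_mem (hne i hi)) _ (minN_mem (hne j hj))

lemma biUnion_mem_Schreier_of_image_minN_mem_Schreier_zero {n : ℕ}
    (hne : ∀ i ∈ s, (F i).Nonempty) (hmem : ∀ i ∈ s, F i ∈ Schreier n)
    (hord : ∀ i ∈ s, ∀ j ∈ s, i < j → ∀ a ∈ F i, ∀ b ∈ F j, a < b)
    (hadm : s.image (fun i => minN (F i)) ∈ Schreier 0) :
    s.biUnion F ∈ Schreier n := by
  have hcard : s.card ≤ 1 := by
    rw [← card_image_of_injOn (strictMonoOn_minN hne hord).injOn]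
    exact hadm
  rcases s.eq_empty_or_nonempty with rfl | ⟨i, hi⟩
  · simpa using empty_mem_Schreier n
  · rw [eq_singleton_iff_unique_mem.mpr ⟨hi, fun j hj => card_le_one.mp hcard j hj i hi⟩,
      singleton_biUnion]
    exact hmem i hi

theorem biUnion_mem_Schreier_add (m n : ℕ) (s : Finset ι) (F : ι → Finset ℕ)
    (hne : ∀ i ∈ s, (F i).Nonempty) (hmem : ∀ i ∈ s, F i ∈ Schreier n)
    (hord : ∀ i ∈ s, ∀ j ∈ s, i < j → ∀ a ∈ F i, ∀ b ∈ F j, a < b)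
    (hadm : s.image (fun i => minN (F i)) ∈ Schreier m) :
    s.biUnion F ∈ Schreier (m + n) := by
  induction m generalizing s with
  | zero => simpa using biUnion_mem_Schreier_of_image_minN_mem_Schreier_zero hne hmem hord hadm
  | succ m ih =>
    obtain ⟨K, G, hG, hGmem, hGne, hGord, hGmin⟩ := hadm
    set t : ℕ → Finset ι := fun j => s.filter (fun i => minN (F i) ∈ G j)
    have hts : ∀ j, t j ⊆ s := fun j => filter_subset _ s
    have himage : ∀ j < K, (t j).image (fun i => minN (F i)) = G j := fun j hj =>
      image_filter_mem_eq_of_subset (hG ▸ subset_biUnion_of_mem G (mem_range.mpr hj))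
    have hmono := strictMonoOn_minN hne hord
    rw [← biUnion_filter_mem_eq_of_image_eq hG, biUnion_biUnion, Nat.succ_add]
    refine ⟨K, fun j => (t j).biUnion F, rfl, fun j hj => ?_, fun j hj => ?_, ?_, ?_⟩
    · refine ih (t j) (fun i hi => hne i (hts j hi)) (fun i hi => hmem i (hts j hi))
        (fun i hi i' hi' => hord i (hts j hi) i' (hts j hi')) ?_
      rw [himage j hj]
      exact hGmem j hj
    · obtain ⟨a, ha⟩ := hGne j hj
      rw [← himage j hj] at ha
      obtain ⟨i, hi, -⟩ := mem_image.mp ha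
      exact biUnion_nonempty.mpr ⟨i, hi, hne i (hts j hi)⟩
    · intro j j' hjj' hj' a ha b hb
      obtain ⟨i, hi, hai⟩ := mem_biUnion.mp ha
      obtain ⟨i', hi', hbi'⟩ := mem_biUnion.mp hb
      have hii' : i < i' := (hmono.lt_iff_lt (hts j hi) (hts j' hi')).mp
        (hGord j j' hjj' hj' _ (mem_filter.mp hi).2 _ (mem_filter.mp hi').2)
      exact hord i (hts j hi) i' (hts j' hi') hii' a hai b hbi'
    · intro a ha
      obtain ⟨i, hi, hai⟩ := mem_biUnion.mp ha
      exact (hGmin _ (mem_filter.mp hi).2).trans (minN_le_of_mem hai)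

end SuccessiveSets

/-- If `F 0 < F 1 < … < F (k-1)` are nonempty sets, each in `S_n`,
and the set of minima `{min (F i)} ∈ S_m` (i.e. the sequence is `S_m`-admissible),
then `⋃ i, F i ∈ S_{m+n}`. -/
theorem stmt11 (m n k : ℕ) (F : Fin k → Finset ℕ)
    (hne : ∀ i, (F i).Nonempty)
    (hmem : ∀ i, F i ∈ Schreier n)
    (hord : ∀ i j : Fin k, i < j → ∀ a ∈ F i, ∀ b ∈ F j, a < b)
    (hadm : Finset.univ.image (fun i => minN (F i)) ∈ Schreier m) :
    Finset.univ.biUnion F ∈ Schreier (m + n) :=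
  biUnion_mem_Schreier_add m n Finset.univ F (fun i _ => hne i) (fun i _ => hmem i)
    (fun i _ j _ => hord i j) hadm
end
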